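/- arXiv:1904.11698 — 4 statements merged into one kernel-verified Lean document; each statement's English description precedes it below -/
import Mathlib

section
/- Let d be a positive natural number and let P_0, P_1, …, P_d be d+1 subsets of ℝ^d. If a point x ∈ ℝ^d lies in the convex hull of every P_i (for 0 ≤ i ≤ d), then there exist points p_0 ∈ P_0, p_1 ∈ P_1, …, p_d ∈ P_d such that x lies in the convex hull of {p_0, p_1, …, p_d}. -/
/-!
Replacing each `P i` by a finite subset whose hull contains `x`, choose colorful points `p`
minimizing the distance from `x` to `K = convexHull (range p)`, and let `y` be the point of `K`
nearest to `x`. If `x ≠ y`, then `y` lies on the supporting hyperplane of `K` orthogonal to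
`x - y`, so by Carathéodory's theorem in that hyperplane it is a convex combination of at most
`d` of the `p i`, and some color `i₀` is not needed. Swapping `p i₀` for any `q ∈ P i₀` keeps `y`
in the hull, so by minimality `y` stays the nearest point, which puts all of `P i₀`, and hence
`x`, on the far side of the hyperplane: absurd.
-/

open Finset Module Metric Set
open scoped RealInnerProductSpace

section InnerProductSpace

variable {E : Type*} [NormedAddCommGroup E] [InnerProductSpace ℝ E]

theorem inner_sub_nonpos_of_dist_le_infDist {K : Set E} (hK : Convex ℝ K) {x y z : E}
    (hy : y ∈ K) (hxy : dist x y ≤ infDist x K) (hz : z ∈ K) : ⟪x - y, z - y⟫ ≤ 0 := by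
  refine (norm_eq_iInf_iff_real_inner_le_zero hK hy).1 ?_ z hz
  have : Nonempty K := ⟨⟨y, hy⟩⟩
  simp_rw [← dist_eq_norm, ← infDist_eq_iInf]
  exact hxy.antisymm (infDist_le_dist_of_mem hy)

theorem inner_sub_nonpos_of_mem_convexHull {s : Set E} {v y x : E}
    (hs : ∀ z ∈ s, ⟪v, z - y⟫ ≤ 0) (hx : x ∈ convexHull ℝ s) : ⟪v, x - y⟫ ≤ 0 := by
  have hconv : Convex ℝ {z : E | ⟪v, z - y⟫ ≤ 0} := by
    simp_rw [inner_sub_right, sub_nonpos]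
    exact convex_halfSpace_le (innerₛₗ ℝ v).isLinear _
  exact convexHull_min hs hconv hx

variable [FiniteDimensional ℝ E]

theorem AffineIndependent.card_le_finrank_of_inner_sub_eq_zero {ι : Type*} [Fintype ι]
    {f : ι → E} (hf : AffineIndependent ℝ f) {v y : E} (hv : v ≠ 0)
    (hfv : ∀ i, ⟪v, f i - y⟫ = 0) : Fintype.card ι ≤ finrank ℝ E := by
  have hspan : vectorSpan ℝ (range f) ≤ (ℝ ∙ v)ᗮ := by
    rw [vectorSpan_def, Submodule.span_le]
    rintro _ ⟨_, ⟨i, rfl⟩, _, ⟨j, rfl⟩, rfl⟩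
    dsimp only
    rw [SetLike.mem_coe, Submodule.mem_orthogonal_singleton_iff_inner_right, vsub_eq_sub,
      ← sub_sub_sub_cancel_right _ _ y, inner_sub_right, hfv, hfv, sub_zero]
  have hcompl := Submodule.finrank_add_finrank_orthogonal (ℝ ∙ v)
  rw [finrank_span_singleton hv] at hcompl
  calc Fintype.card ι ≤ finrank ℝ (vectorSpan ℝ (range f)) + 1 := hf.card_le_finrank_succ
    _ ≤ finrank ℝ (ℝ ∙ v)ᗮ + 1 := by gcongr; exact Submodule.finrank_mono hspan
    _ = finrank ℝ E := by omega

theorem exists_forall_mem_convexHull_range_update {ι : Type*} [Fintype ι] [DecidableEq ι]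
    (hι : finrank ℝ E < Fintype.card ι) {p : ι → E} {v y : E} (hv : v ≠ 0)
    (hy : y ∈ convexHull ℝ (range p)) (hp : ∀ i, ⟪v, p i - y⟫ ≤ 0) :
    ∃ i₀, ∀ q, y ∈ convexHull ℝ (range (Function.update p i₀ q)) := by
  obtain ⟨κ, _, z, w, hzp, hz, hw0, hw1, hwz⟩ := eq_pos_convex_span_of_mem_convexHull hy
  choose g hg using fun k => hzp ⟨k, rfl⟩
  have hface : ∀ k, ⟪v, z k - y⟫ = 0 := by
    have hsum : ∑ k, w k * ⟪v, z k - y⟫ = 0 := by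
      simp_rw [← real_inner_smul_right, ← inner_sum, smul_sub, sum_sub_distrib, ← sum_smul,
        hw1, one_smul, hwz, sub_self, inner_zero_right]
    have hnonpos : ∀ k ∈ Finset.univ, w k * ⟪v, z k - y⟫ ≤ 0 := fun k _ =>
      mul_nonpos_of_nonneg_of_nonpos (hw0 k).le (hg k ▸ hp (g k))
    intro k
    exact (mul_eq_zero.1 ((sum_eq_zero_iff_of_nonpos hnonpos).1 hsum k (mem_univ k))).resolve_left
      (hw0 k).ne'
  obtain ⟨i₀, hi₀⟩ : ∃ i₀, i₀ ∉ range g := by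
    by_contra! hg_surj
    have := Fintype.card_le_of_surjective g hg_surj
    have := hz.card_le_finrank_of_inner_sub_eq_zero hv hface
    omega
  have hyz : y ∈ convexHull ℝ (range z) := hwz ▸
    (convex_convexHull ℝ _).sum_mem (fun k _ => (hw0 k).le) hw1
      fun k _ => subset_convexHull ℝ _ ⟨k, rfl⟩
  refine ⟨i₀, fun q => convexHull_mono ?_ hyz⟩
  rintro _ ⟨k, rfl⟩
  exact ⟨g k, by rw [Function.update_of_ne (fun h => hi₀ ⟨k, h⟩), hg]⟩

theorem exists_colorful_mem_convexHull_of_finite {ι : Type*} [Fintype ι]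
    (hι : finrank ℝ E < Fintype.card ι) {P : ι → Set E} (hP : ∀ i, (P i).Finite) {x : E}
    (hx : ∀ i, x ∈ convexHull ℝ (P i)) :
    ∃ p : ι → E, (∀ i, p i ∈ P i) ∧ x ∈ convexHull ℝ (range p) := by
  classical
  have hsel : (pi univ P).Nonempty :=
    univ_pi_nonempty_iff.2 fun i => convexHull_nonempty_iff.1 ⟨x, hx i⟩
  obtain ⟨p, hp, hmin⟩ := (pi univ P).exists_min_image
    (fun p => infDist x (convexHull ℝ (range p))) (Set.Finite.pi hP) hsel
  refine ⟨p, fun i => hp i (mem_univ i), ?_⟩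
  have : Nonempty ι := Fintype.card_pos_iff.1 (by omega)
  obtain ⟨y, hyK, hxy⟩ := ((finite_range p).isCompact_convexHull ℝ).exists_infDist_eq_dist
    ((range_nonempty p).mono (subset_convexHull ℝ _)) x
  by_contra hxK
  have hv : x - y ≠ 0 := sub_ne_zero.2 fun h => hxK (h ▸ hyK)
  obtain ⟨i₀, hi₀⟩ := exists_forall_mem_convexHull_range_update hι hv hyK fun i =>
    inner_sub_nonpos_of_dist_le_infDist (convex_convexHull ℝ _) hyK hxy.ge
      (subset_convexHull ℝ _ ⟨i, rfl⟩)
  have hfar : ∀ q ∈ P i₀, ⟪x - y, q - y⟫ ≤ 0 := fun q hq =>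
    inner_sub_nonpos_of_dist_le_infDist (convex_convexHull ℝ _) (hi₀ q)
      (hxy.ge.trans (hmin _ ((update_mem_pi_iff_of_mem hp).2 fun _ => hq)))
      (subset_convexHull ℝ _ ⟨i₀, Function.update_self ..⟩)
  exact hv (real_inner_self_nonpos.1 (inner_sub_nonpos_of_mem_convexHull hfar (hx i₀)))

end InnerProductSpace

section VectorSpace

variable {V W : Type*} [AddCommGroup V] [Module ℝ V] [AddCommGroup W] [Module ℝ W]

theorem LinearEquiv.mem_convexHull_image_iff (e : V ≃ₗ[ℝ] W) {s : Set V} {x : V} :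
    e x ∈ convexHull ℝ (e '' s) ↔ x ∈ convexHull ℝ s := by
  rw [← e.coe_toLinearMap, ← LinearMap.image_convexHull, e.coe_toLinearMap,
    e.injective.mem_set_image]

theorem exists_colorful_mem_convexHull [FiniteDimensional ℝ V] {ι : Type*} [Fintype ι]
    (hι : finrank ℝ V < Fintype.card ι) {P : ι → Set V} {x : V}
    (hx : ∀ i, x ∈ convexHull ℝ (P i)) :
    ∃ p : ι → V, (∀ i, p i ∈ P i) ∧ x ∈ convexHull ℝ (range p) := by
  choose t htP hxt using fun i => by
    simpa only [mem_iUnion, exists_prop] using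
      (convexHull_eq_union_convexHull_finite_subsets (P i)).subset (hx i)
  let e : V ≃ₗ[ℝ] EuclideanSpace ℝ (Fin (finrank ℝ V)) :=
    (finBasis ℝ V).equivFun.trans (WithLp.linearEquiv 2 ℝ _).symm
  obtain ⟨p, hpt, hxp⟩ := exists_colorful_mem_convexHull_of_finite (by simpa using hι)
    (fun i => (t i).finite_toSet.image e) fun i => e.mem_convexHull_image_iff.2 (hxt i)
  refine ⟨fun i => e.symm (p i), fun i => ?_, ?_⟩
  · obtain ⟨z, hz, hzp⟩ := hpt i
    simpa [← hzp] using htP i hz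
  · rw [← e.mem_convexHull_image_iff, ← range_comp]
    simpa [Function.comp_def] using hxp

end VectorSpace

theorem colorful_caratheodory_general (d : ℕ)
    (P : Fin (d + 1) → Set (Fin d → ℝ)) (x : Fin d → ℝ)
    (hx : ∀ i, x ∈ convexHull ℝ (P i)) :
    ∃ p : Fin (d + 1) → (Fin d → ℝ),
      (∀ i, p i ∈ P i) ∧ x ∈ convexHull ℝ (Set.range p) :=
  exists_colorful_mem_convexHull (by simp) hx

/-- **Bárány's Colorful Carathéodory Theorem.**
Let `d` be a positive natural number and `P 0, …, P d` be `d + 1` subsets of `ℝ^d`.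
If a point `x ∈ ℝ^d` lies in the convex hull of every `P i`, then one can choose
points `p i ∈ P i` such that `x` lies in the convex hull of `{p 0, …, p d}`. -/
theorem colorful_caratheodory (d : ℕ) (hd : 0 < d)
    (P : Fin (d + 1) → Set (Fin d → ℝ)) (x : Fin d → ℝ)
    (hx : ∀ i, x ∈ convexHull ℝ (P i)) :
    ∃ p : Fin (d + 1) → (Fin d → ℝ),
      (∀ i, p i ∈ P i) ∧ x ∈ convexHull ℝ (Set.range p) :=
  colorful_caratheodory_general d P x hx
end

section
/- Let M be a matroid with rank function ρ on a finite ground set E, let r be a natural number with 1 ≤ r ≤ |E| and ρ(E) = r − 1, and set r* = |E| − r. Let M* be the dual matroid of M with rank function ρ*. If S ⊆ E is inclusion-minimal among subsets T ⊆ E satisfying ρ*(E \ T) = r* − 1, then S is a double circuit of M, i.e., ρ(S) = |S| − 2 and ρ(S \ {e}) = |S| − 2 for every e ∈ S. -/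
/-!
By the formula for the dual rank, `ρ* (E \ T) = r* - 1` says exactly that `T` has nullity `2`
in `M`, so `S` is a minimal set of nullity `2`. Removing one element from a set never raises
its rank and lowers it by at most one, so `S \ {e}` has nullity `1` or `2`, and minimality of `S`
rules out `2`.
-/

open Finset

section RankFunction

variable {α : Type*} [DecidableEq α] {ρ : Finset α → ℕ}

lemma rank_le_rank_erase_add_one (hcard : ∀ X : Finset α, ρ X ≤ X.card)
    (hsubmod : ∀ X Y : Finset α, ρ (X ∪ Y) + ρ (X ∩ Y) ≤ ρ X + ρ Y)
    {S : Finset α} {e : α} (he : e ∈ S) : ρ S ≤ ρ (S.erase e) + 1 := by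
  have hsub := hsubmod {e} (S.erase e)
  rw [← insert_eq, insert_erase he] at hsub
  have hsingle : ρ {e} ≤ 1 := by simpa using hcard {e}
  omega

lemma rank_erase_add_two_of_minimal (hcard : ∀ X : Finset α, ρ X ≤ X.card)
    (hmono : ∀ ⦃X Y : Finset α⦄, X ⊆ Y → ρ X ≤ ρ Y)
    (hsubmod : ∀ X Y : Finset α, ρ (X ∪ Y) + ρ (X ∩ Y) ≤ ρ X + ρ Y)
    {S : Finset α} (hS : ρ S + 2 = S.card) (hmin : ∀ T ⊂ S, ρ T + 2 ≠ T.card)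
    {e : α} (he : e ∈ S) : ρ (S.erase e) + 2 = S.card := by
  have hdrop := rank_le_rank_erase_add_one hcard hsubmod he
  have hle := hmono (erase_subset e S)
  have hcard_erase := card_erase_add_one he
  have hnot := hmin _ (erase_ssubset he)
  omega

lemma dual_rank_compl_add_two_eq_iff [Fintype α] {ρd : Finset α → ℕ}
    (hdual : ∀ X : Finset α, ρd X + ρ univ = X.card + ρ (univ \ X)) (T : Finset α) :
    ρd (univ \ T) + ρ univ + 2 = Fintype.card α ↔ ρ T + 2 = T.card := by
  have h := hdual (univ \ T)
  rw [Finset.sdiff_sdiff_eq_self (subset_univ T), card_univ_sdiff] at h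
  have hT := card_le_univ T
  omega

end RankFunction

theorem minimal_dual_corank_is_double_circuit_general {α : Type*} [DecidableEq α] [Fintype α]
    (ρ : Finset α → ℕ)
    (hcard : ∀ X : Finset α, ρ X ≤ X.card)
    (hmono : ∀ ⦃X Y : Finset α⦄, X ⊆ Y → ρ X ≤ ρ Y)
    (hsubmod : ∀ X Y : Finset α, ρ (X ∪ Y) + ρ (X ∩ Y) ≤ ρ X + ρ Y)
    (r : ℕ) (hr2 : r ≤ Fintype.card α)
    (hrank : ρ Finset.univ + 1 = r)
    (ρd : Finset α → ℕ)
    (hdual : ∀ X : Finset α, ρd X + ρ Finset.univ = X.card + ρ (Finset.univ \ X))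
    (S : Finset α)
    (hS : ρd (Finset.univ \ S) + 1 = Fintype.card α - r)
    (hSmin : ∀ T ⊂ S, ¬ (ρd (Finset.univ \ T) + 1 = Fintype.card α - r)) :
    ρ S + 2 = S.card ∧ ∀ e ∈ S, ρ (S.erase e) + 2 = S.card := by
  have hnullity_two : ∀ T : Finset α,
      ρd (univ \ T) + 1 = Fintype.card α - r ↔ ρ T + 2 = T.card := fun T => by
    rw [← dual_rank_compl_add_two_eq_iff hdual T]
    omega
  have hS' := (hnullity_two S).1 hS
  exact ⟨hS', fun e he => rank_erase_add_two_of_minimal hcard hmono hsubmod hS'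
    (fun T hT => mt (hnullity_two T).2 (hSmin T hT)) he⟩

/-- Let `M` be a matroid with rank function `ρ` on a finite ground set `E`
(here the whole finite type, so `E = Finset.univ` and `|E| = Fintype.card α`),
let `1 ≤ r ≤ |E|` with `ρ E = r - 1`, and set `r* = |E| - r`. Let `ρd` be the
rank function of the dual matroid `M*`, so `ρd X = |X| + ρ (E \ X) - ρ E`.
If `S` is inclusion-minimal among subsets `T` with `ρd (E \ T) = r* - 1`,
then `S` is a double circuit of `M`: `ρ S = |S| - 2` and
`ρ (S \ {e}) = |S| - 2` for every `e ∈ S`.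
(Equalities involving subtraction are written additively.) -/
theorem minimal_dual_corank_is_double_circuit {α : Type*} [DecidableEq α] [Fintype α]
    (ρ : Finset α → ℕ)
    (hcard : ∀ X : Finset α, ρ X ≤ X.card)
    (hmono : ∀ ⦃X Y : Finset α⦄, X ⊆ Y → ρ X ≤ ρ Y)
    (hsubmod : ∀ X Y : Finset α, ρ (X ∪ Y) + ρ (X ∩ Y) ≤ ρ X + ρ Y)
    (r : ℕ) (hr1 : 1 ≤ r) (hr2 : r ≤ Fintype.card α)
    (hrank : ρ Finset.univ + 1 = r)
    (ρd : Finset α → ℕ)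
    (hdual : ∀ X : Finset α, ρd X + ρ Finset.univ = X.card + ρ (Finset.univ \ X))
    (S : Finset α)
    (hS : ρd (Finset.univ \ S) + 1 = Fintype.card α - r)
    (hSmin : ∀ T ⊂ S, ¬ (ρd (Finset.univ \ T) + 1 = Fintype.card α - r)) :
    ρ S + 2 = S.card ∧ ∀ e ∈ S, ρ (S.erase e) + 2 = S.card :=
  minimal_dual_corank_is_double_circuit_general ρ hcard hmono hsubmod r hr2 hrank ρd hdual S hS
    hSmin
end

section
/- Let M be a matroid of rank d ≥ 1 with rank function ρ on a finite ground set E. Let A, B ⊆ E with |A| = |B| = d, |A ∩ B| = d − 1, ρ(A) ≤ d − 1, and ρ(B) ≤ d − 1. If A ∩ B is independent in M, then A ∪ B contains a double circuit of M. -/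
/-! Submodularity gives `ρ (A ∪ B) ≤ ρ A + ρ B - ρ (A ∩ B) ≤ d - 1`, while `|A ∪ B| = d + 1`, so
`A ∪ B` has rank deficiency at least two. Any set of deficiency at least two contains an
inclusion-minimal one; deleting an element from it lowers the deficiency, and monotonicity of `ρ`
forces it to exactly two both for the set and for every single-element deletion. -/

/-- `D` is a double circuit of the matroid with rank function `ρ`:
`ρ D = |D| - 2` and `ρ (D \ {e}) = |D| - 2` for every `e ∈ D`. -/
def IsDoubleCircuit {α : Type*} [DecidableEq α] (ρ : Finset α → ℕ) (D : Finset α) : Prop :=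
  ρ D + 2 = D.card ∧ ∀ e ∈ D, ρ (D.erase e) + 2 = D.card

section DoubleCircuit

variable {α : Type*} [DecidableEq α] {ρ : Finset α → ℕ}

theorem isDoubleCircuit_of_forall_erase (hmono : ∀ ⦃X Y : Finset α⦄, X ⊆ Y → ρ X ≤ ρ Y)
    {S : Finset α} (hS : ρ S + 2 ≤ S.card)
    (hmin : ∀ e ∈ S, (S.erase e).card < ρ (S.erase e) + 2) : IsDoubleCircuit ρ S := by
  have herase : ∀ e ∈ S, ρ (S.erase e) + 2 = S.card := fun e he => by
    have hcard := Finset.card_erase_of_mem he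
    have hle := hmono (S.erase_subset e)
    have := hmin e he
    omega
  obtain ⟨e, he⟩ : S.Nonempty := Finset.card_pos.mp (by omega)
  have := herase e he
  have := hmono (S.erase_subset e)
  exact ⟨by omega, herase⟩

theorem exists_isDoubleCircuit_subset_of_rank_add_two_le
    (hmono : ∀ ⦃X Y : Finset α⦄, X ⊆ Y → ρ X ≤ ρ Y)
    (S : Finset α) (hS : ρ S + 2 ≤ S.card) : ∃ D ⊆ S, IsDoubleCircuit ρ D := by
  induction S using Finset.strongInduction with
  | H S ih =>
    by_cases h : ∃ e ∈ S, ρ (S.erase e) + 2 ≤ (S.erase e).card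
    · obtain ⟨e, he, hle⟩ := h
      obtain ⟨D, hDS, hD⟩ := ih _ (Finset.erase_ssubset he) hle
      exact ⟨D, hDS.trans (S.erase_subset e), hD⟩
    · push Not at h
      exact ⟨S, subset_rfl, isDoubleCircuit_of_forall_erase hmono hS h⟩

end DoubleCircuit

theorem union_contains_double_circuit_of_indep_inter_general {α : Type*} [DecidableEq α]
    (ρ : Finset α → ℕ)
    (hmono : ∀ ⦃X Y : Finset α⦄, X ⊆ Y → ρ X ≤ ρ Y)
    (hsubmod : ∀ X Y : Finset α, ρ (X ∪ Y) + ρ (X ∩ Y) ≤ ρ X + ρ Y)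
    (d : ℕ)
    (A B : Finset α) (hA : A.card = d) (hB : B.card = d)
    (hABcard : (A ∩ B).card + 1 = d)
    (hρA : ρ A + 1 ≤ d) (hρB : ρ B + 1 ≤ d)
    (hindep : ρ (A ∩ B) = (A ∩ B).card) :
    ∃ D ⊆ A ∪ B, IsDoubleCircuit ρ D := by
  have hunion := Finset.card_union_add_card_inter A B
  have hsub := hsubmod A B
  exact exists_isDoubleCircuit_subset_of_rank_add_two_le hmono (A ∪ B) (by omega)

/-- Let `M` be a matroid of rank `d ≥ 1` with rank function `ρ` on a finite ground set.
Let `A, B` with `|A| = |B| = d`, `|A ∩ B| = d - 1`, `ρ A ≤ d - 1` and `ρ B ≤ d - 1`.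
If `A ∩ B` is independent, then `A ∪ B` contains a double circuit. -/
theorem union_contains_double_circuit_of_indep_inter {α : Type*} [DecidableEq α] [Fintype α]
    (ρ : Finset α → ℕ)
    (hcard : ∀ X : Finset α, ρ X ≤ X.card)
    (hmono : ∀ ⦃X Y : Finset α⦄, X ⊆ Y → ρ X ≤ ρ Y)
    (hsubmod : ∀ X Y : Finset α, ρ (X ∪ Y) + ρ (X ∩ Y) ≤ ρ X + ρ Y)
    (d : ℕ) (hd : 1 ≤ d) (hrank : ρ Finset.univ = d)
    (A B : Finset α) (hA : A.card = d) (hB : B.card = d)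
    (hABcard : (A ∩ B).card + 1 = d)
    (hρA : ρ A + 1 ≤ d) (hρB : ρ B + 1 ≤ d)
    (hindep : ρ (A ∩ B) = (A ∩ B).card) :
    ∃ D ⊆ A ∪ B, IsDoubleCircuit ρ D :=
  union_contains_double_circuit_of_indep_inter_general ρ hmono hsubmod d A B hA hB hABcard hρA hρB
    hindep
end

section
/- Let M be a matroid of rank d ≥ 1 with rank function ρ on a finite ground set E. Let A, B ⊆ E with |A| = |B| = d, |A ∩ B| = d − 1, and ρ(B) ≤ d − 1. If there exists an element a ∈ A \ B such that ρ((A ∩ B) ∪ {a}) = ρ(A ∩ B), then A ∪ B contains a double circuit of M. -/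
/-! A subset of `A ∪ B` of nullity at least two exists by submodularity: since `a` does not raise
the rank of `A ∩ B`, neither does `A`, so `ρ (A ∪ B) ≤ ρ B ≤ d - 1 = |A ∪ B| - 2`. A minimal
subset of nullity at least two is then a double circuit. -/

open Finset

theorem exists_isDoubleCircuit_subset {α : Type*} [DecidableEq α] (ρ : Finset α → ℕ)
    (hmono : Monotone ρ) (X : Finset α) (hX : ρ X + 2 ≤ X.card) :
    ∃ D ⊆ X, IsDoubleCircuit ρ D := by
  obtain ⟨D, hDX, hmin⟩ :=
    exists_minimal_le_of_wellFoundedLT (fun D : Finset α ↦ ρ D + 2 ≤ D.card) X hX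
  have hD : ρ D + 2 ≤ D.card := hmin.prop
  have herase : ∀ e ∈ D, ρ (D.erase e) + 2 = D.card := fun e he ↦ by
    have hnot := hmin.not_prop_of_lt (erase_ssubset he)
    have hle := hmono (erase_subset e D)
    have hcard := card_erase_of_mem he
    omega
  obtain ⟨e, he⟩ : D.Nonempty := card_pos.1 (by omega)
  have hle := hmono (erase_subset e D)
  exact ⟨D, hDX, by have := herase e he; omega, herase⟩

theorem rank_union_le_of_rank_le_rank_inter {α : Type*} [DecidableEq α] (ρ : Finset α → ℕ)
    (hsubmod : ∀ X Y : Finset α, ρ (X ∪ Y) + ρ (X ∩ Y) ≤ ρ X + ρ Y) {A B : Finset α}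
    (hA : ρ A ≤ ρ (A ∩ B)) : ρ (A ∪ B) ≤ ρ B := by
  have := hsubmod A B
  omega

theorem union_contains_double_circuit_of_nonincreasing_general {α : Type*} [DecidableEq α]
    (ρ : Finset α → ℕ)
    (hmono : ∀ ⦃X Y : Finset α⦄, X ⊆ Y → ρ X ≤ ρ Y)
    (hsubmod : ∀ X Y : Finset α, ρ (X ∪ Y) + ρ (X ∩ Y) ≤ ρ X + ρ Y)
    (d : ℕ)
    (A B : Finset α) (hA : A.card = d) (hB : B.card = d)
    (hABcard : (A ∩ B).card + 1 = d)
    (hρB : ρ B + 1 ≤ d)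
    (ha : ∃ a ∈ A \ B, ρ (insert a (A ∩ B)) = ρ (A ∩ B)) :
    ∃ D ⊆ A ∪ B, IsDoubleCircuit ρ D := by
  obtain ⟨a, haAB, hρa⟩ := ha
  obtain ⟨haA, haB⟩ := mem_sdiff.1 haAB
  have hinsert : insert a (A ∩ B) = A := by
    refine eq_of_subset_of_card_le (insert_subset haA inter_subset_left) ?_
    rw [card_insert_of_notMem fun h ↦ haB (mem_inter.1 h).2]
    omega
  have hρunion : ρ (A ∪ B) ≤ ρ B :=
    rank_union_le_of_rank_le_rank_inter ρ hsubmod (hinsert ▸ hρa).le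
  have hcard_union : (A ∪ B).card = d + 1 := by
    have := card_union_add_card_inter A B
    omega
  exact exists_isDoubleCircuit_subset ρ hmono (A ∪ B) (by omega)

/-- Let `M` be a matroid of rank `d ≥ 1` with rank function `ρ` on a finite ground set.
Let `A, B` with `|A| = |B| = d`, `|A ∩ B| = d - 1` and `ρ B ≤ d - 1`. If some
`a ∈ A \ B` does not increase the rank of `A ∩ B`, i.e.
`ρ ((A ∩ B) ∪ {a}) = ρ (A ∩ B)`, then `A ∪ B` contains a double circuit. -/
theorem union_contains_double_circuit_of_nonincreasing {α : Type*} [DecidableEq α] [Fintype α]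
    (ρ : Finset α → ℕ)
    (hcard : ∀ X : Finset α, ρ X ≤ X.card)
    (hmono : ∀ ⦃X Y : Finset α⦄, X ⊆ Y → ρ X ≤ ρ Y)
    (hsubmod : ∀ X Y : Finset α, ρ (X ∪ Y) + ρ (X ∩ Y) ≤ ρ X + ρ Y)
    (d : ℕ) (hd : 1 ≤ d) (hrank : ρ Finset.univ = d)
    (A B : Finset α) (hA : A.card = d) (hB : B.card = d)
    (hABcard : (A ∩ B).card + 1 = d)
    (hρB : ρ B + 1 ≤ d)
    (ha : ∃ a ∈ A \ B, ρ (insert a (A ∩ B)) = ρ (A ∩ B)) :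
    ∃ D ⊆ A ∪ B, IsDoubleCircuit ρ D :=
  union_contains_double_circuit_of_nonincreasing_general ρ hmono hsubmod d A B hA hB hABcard hρB ha
end
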